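/- Let 𝔫 be the 5-dimensional real Lie algebra with orthonormal basis {E₁,…,E₅} and non-zero brackets [E₁,E₂] = m·E₅ and [E₃,E₄] = m·E₅ with m > 0. Then the diagonal endomorphism D defined by D(E₁) = (3/2)m²·E₁, D(E₂) = (3/2)m²·E₂, D(E₃) = (3/2)m²·E₃, D(E₄) = (3/2)m²·E₄, D(E₅) = 3m²·E₅ is a derivation of 𝔫, and Ric = −2m²·Id + D. -/

import Mathlib

open scoped BigOperators

/-! Since `br m` takes values in `ℝ • E 4` and `E 4` is central, a map acting by `a` on
`E 0, …, E 3` and by `2 * a` on `E 4` is a derivation. In coordinates the Ricci form of `br m`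
is `-(m²/2) (X₀Y₀ + ⋯ + X₃Y₃) + m² X₄Y₄`, which is `-2m² + D` with `a = (3/2) m²`. -/

namespace Nilsoliton1

noncomputable section

abbrev V : Type := Fin 5 → ℝ

/-- The orthonormal basis vectors E₁,…,E₅ (indexed 0,…,4). -/
def E (i : Fin 5) : V := Pi.single i 1

/-- The inner product making `E` an orthonormal basis. -/
def ip (x y : V) : ℝ := ∑ i, x i * y i

/-- `D` is a derivation of the bracket `br`. -/
def IsDerivation (br : V → V → V) (D : V →ₗ[ℝ] V) : Prop :=
  ∀ X Y : V, D (br X Y) = br (D X) Y + br X (D Y)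

/-- `Ric` is the Ricci operator of the nilpotent Lie group with left-invariant
metric determined by the bracket `br` and the orthonormal basis `E`. -/
def IsRicci (br : V → V → V) (Ric : V →ₗ[ℝ] V) : Prop :=
  ∀ X Y : V, ip (Ric X) Y =
      -(1/2) * (∑ i : Fin 5, ip (br X (E i)) (br Y (E i)))
      + (1/4) * (∑ i : Fin 5, ∑ j : Fin 5, ip (br (E i) (E j)) X * ip (br (E i) (E j)) Y)

/-- The bracket: [E₁,E₂] = m·E₅, [E₃,E₄] = m·E₅. -/
def br (m : ℝ) (X Y : V) : V :=
  (m * (X 0 * Y 1 - X 1 * Y 0) + m * (X 2 * Y 3 - X 3 * Y 2)) • E 4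

theorem sum_smul_E (x : V) : ∑ i, x i • E i = x := by
  simpa [E, ← Pi.single_smul] using Finset.univ_sum_single x

theorem ip_E (x : V) (j : Fin 5) : ip x (E j) = x j := by
  simp [ip, E, Pi.single_apply]

theorem apply_eq_of_apply_E {a b : ℝ} {D : V →ₗ[ℝ] V} (h0 : D (E 0) = a • E 0)
    (h1 : D (E 1) = a • E 1) (h2 : D (E 2) = a • E 2) (h3 : D (E 3) = a • E 3)
    (h4 : D (E 4) = b • E 4) (x : V) : D x = a • x + ((b - a) * x 4) • E 4 := by
  conv_lhs => rw [← sum_smul_E x]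
  rw [map_sum]
  simp only [map_smul, Fin.sum_univ_five, h0, h1, h2, h3, h4]
  funext i
  fin_cases i <;> simp [E] <;> ring

theorem br_add_smul_E4_left (m c t : ℝ) (X Y : V) :
    br m (c • X + t • E 4) Y = c • br m X Y := by
  simp only [br, E, smul_smul]; congr 1; simp; ring

theorem br_add_smul_E4_right (m c t : ℝ) (X Y : V) :
    br m X (c • Y + t • E 4) = c • br m X Y := by
  simp only [br, E, smul_smul]; congr 1; simp; ring

theorem isDerivation_br {m a : ℝ} {D : V →ₗ[ℝ] V}
    (hD : ∀ x, D x = a • x + (a * x 4) • E 4) : IsDerivation (br m) D := by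
  intro X Y
  rw [hD, hD X, hD Y, br_add_smul_E4_left, br_add_smul_E4_right, br]
  funext i
  fin_cases i <;> simp [E]

theorem sum_ip_br_E (m : ℝ) (X Y : V) :
    ∑ i, ip (br m X (E i)) (br m Y (E i)) =
      m ^ 2 * (X 0 * Y 0 + X 1 * Y 1 + X 2 * Y 2 + X 3 * Y 3) := by
  simp [ip, br, E, Fin.sum_univ_five]
  ring

theorem sum_ip_br_E_E (m : ℝ) (X Y : V) :
    ∑ i, ∑ j, ip (br m (E i) (E j)) X * ip (br m (E i) (E j)) Y = 4 * m ^ 2 * (X 4 * Y 4) := by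
  simp [ip, br, E, Fin.sum_univ_five]
  ring

theorem IsRicci.br_apply {m : ℝ} {Ric : V →ₗ[ℝ] V} (h : IsRicci (br m) Ric) (X : V) :
    Ric X = (-(1/2) * m ^ 2) • X + ((3/2) * m ^ 2 * X 4) • E 4 := by
  funext j
  rw [← ip_E (Ric X), h, sum_ip_br_E, sum_ip_br_E_E]
  fin_cases j <;> simp [E] <;> ring

theorem stmt1_general (m : ℝ)
    (Ric : V →ₗ[ℝ] V) (hRic : IsRicci (br m) Ric)
    (D : V →ₗ[ℝ] V)
    (hD0 : D (E 0) = ((3/2) * m ^ 2) • E 0)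
    (hD1 : D (E 1) = ((3/2) * m ^ 2) • E 1)
    (hD2 : D (E 2) = ((3/2) * m ^ 2) • E 2)
    (hD3 : D (E 3) = ((3/2) * m ^ 2) • E 3)
    (hD4 : D (E 4) = (3 * m ^ 2) • E 4) :
    IsDerivation (br m) D ∧
    Ric = (-2 * m ^ 2) • (LinearMap.id : V →ₗ[ℝ] V) + D := by
  have hD (x : V) : D x = ((3/2) * m ^ 2) • x + ((3/2) * m ^ 2 * x 4) • E 4 := by
    rw [apply_eq_of_apply_E hD0 hD1 hD2 hD3 hD4]; congr 2; ring
  refine ⟨isDerivation_br hD, LinearMap.ext fun X => ?_⟩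
  rw [hRic.br_apply, LinearMap.add_apply, hD]
  simp only [LinearMap.smul_apply, LinearMap.id_apply]
  module

theorem stmt1 (m : ℝ) (hm : 0 < m)
    (Ric : V →ₗ[ℝ] V) (hRic : IsRicci (br m) Ric)
    (D : V →ₗ[ℝ] V)
    (hD0 : D (E 0) = ((3/2) * m ^ 2) • E 0)
    (hD1 : D (E 1) = ((3/2) * m ^ 2) • E 1)
    (hD2 : D (E 2) = ((3/2) * m ^ 2) • E 2)
    (hD3 : D (E 3) = ((3/2) * m ^ 2) • E 3)
    (hD4 : D (E 4) = (3 * m ^ 2) • E 4) :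
    IsDerivation (br m) D ∧
    Ric = (-2 * m ^ 2) • (LinearMap.id : V →ₗ[ℝ] V) + D :=
  stmt1_general m Ric hRic D hD0 hD1 hD2 hD3 hD4

end

end Nilsoliton1
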